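/- arXiv:2407.19935 — 2 statements merged into one kernel-verified Lean document; each statement's English description precedes it below -/
import Mathlib

section
/- Let T be a bounded operator on a Hilbert space H and Q a closed subspace invariant under T*. If 1 is not an eigenvalue of T, then 1 is not an eigenvalue of the compression P_Q T|_Q, provided T is a contraction. More precisely: if T is a contraction and 1 ∉ σ_p(T), then 1 ∉ σ_p(P_Q T|_Q) for any closed T*-invariant subspace Q. -/
open ContinuousLinearMap

/-- If `T` is a contraction on a Hilbert space `H`, `Q` is a closed subspace
invariant under `T*`, and `1` is not an eigenvalue of `T`, then `1` is not an eigenvalue of the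
compression `P_Q T|_Q`. -/
theorem one_not_eigenvalue_compression
    {H : Type*} [NormedAddCommGroup H] [InnerProductSpace ℂ H] [CompleteSpace H]
    (T : H →L[ℂ] H) (hT : ‖T‖ ≤ 1)
    (Q : Submodule ℂ H) [CompleteSpace Q]
    (hQinv : ∀ q ∈ Q, adjoint T q ∈ Q)
    (hno1 : ∀ h : H, T h = h → h = 0) :
    ∀ q ∈ Q, (Submodule.orthogonalProjectionOnto Q (T q) : H) = q → q = 0 := by
  intro q hq hPq
  have hproj : (Submodule.orthogonalProjectionOnto Q q : H) = q :=
    congrArg _ (Submodule.orthogonalProjectionOnto_mem_subspace_eq_self (⟨q, hq⟩ : Q))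
  have hinner : (inner ℂ (T q) q : ℂ) = inner ℂ q q := by
    calc (inner ℂ (T q) q : ℂ)
        = inner ℂ (T q) ((Submodule.orthogonalProjectionOnto Q q : H)) := by rw [hproj]
      _ = inner ℂ ((Submodule.orthogonalProjectionOnto Q (T q) : H)) q :=
          (Submodule.inner_starProjection_left_eq_right Q (T q) q).symm
      _ = inner ℂ q q := by rw [hPq]
    
  have hre : RCLike.re (inner ℂ (T q) q : ℂ) = ‖q‖ ^ 2 := by
    rw [hinner, inner_self_eq_norm_sq]
  have hnormT : ‖T q‖ ≤ ‖q‖ := by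
    calc ‖T q‖ ≤ ‖T‖ * ‖q‖ := T.le_opNorm q
      _ ≤ 1 * ‖q‖ := by gcongr
      _ = ‖q‖ := one_mul _
  have hfix : T q = q := by
    have hexp : ‖T q - q‖ ^ 2 = ‖T q‖ ^ 2 - 2 * RCLike.re (inner ℂ (T q) q : ℂ) + ‖q‖ ^ 2 := by
      rw [@norm_sub_sq ℂ]; try ring
    have h0 : ‖T q - q‖ ^ 2 ≤ 0 := by
      rw [hexp, hre]
      nlinarith [norm_nonneg (T q), norm_nonneg q]
    have := sq_nonneg ‖T q - q‖
    have : ‖T q - q‖ ^ 2 = 0 := le_antisymm h0 this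
    have : ‖T q - q‖ = 0 := by nlinarith [norm_nonneg (T q - q)]
    exact sub_eq_zero.mp (norm_eq_zero.mp this)
  exact hno1 q hfix
end

section
/- Let Q be a closed subspace of H²(𝔻,E) invariant under (M_{z^E})*, and let ψ ∈ H^∞(𝔻,B(E)) with ‖ψ‖_∞ ≤ 1 be such that Q is invariant under M_ψ* and 1 ∉ σ_p(ψ(z)) for every z ∈ 𝔻. Then 1 is not an eigenvalue of the compression P_Q M_ψ|_Q. -/
open ContinuousLinearMap Metric
open MeasureTheory intervalIntegral Complex
open scoped ENNReal NNReal ComplexConjugate Real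

set_option linter.unusedSectionVars false

section HardyAux

variable {E : Type*} [NormedAddCommGroup E] [InnerProductSpace ℂ E] [CompleteSpace E]

lemma hardy_norm_coeff_le (F : lp (fun _ : ℕ => E) 2) (n : ℕ) : ‖F n‖ ≤ ‖F‖ :=
  lp.norm_apply_le_norm (by norm_num) F n

lemma hardy_summable (F : lp (fun _ : ℕ => E) 2) {z : ℂ} (hz : ‖z‖ < 1) :
    Summable (fun n : ℕ => z ^ n • F n) := by
  refine Summable.of_norm ?_
  have h : ∀ n : ℕ, ‖z ^ n • F n‖ ≤ ‖F‖ * ‖z‖ ^ n := by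
    intro n
    rw [norm_smul, norm_pow, mul_comm]
    exact mul_le_mul_of_nonneg_right (hardy_norm_coeff_le F n) (by positivity)
  exact Summable.of_nonneg_of_le (fun n => norm_nonneg _) h
    (((summable_geometric_of_lt_one (norm_nonneg z) hz)).mul_left ‖F‖)

lemma hardy_coeff_zero (F : lp (fun _ : ℕ => E) 2)
    (h : ∀ z ∈ ball (0 : ℂ) 1, (∑' n : ℕ, z ^ n • F n) = 0) : F = 0 := by
  set p : FormalMultilinearSeries ℂ ℂ E :=
    fun n => ContinuousMultilinearMap.mkPiRing ℂ (Fin n) (F n) with hp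
  have hrad : (1 : ℝ≥0∞) ≤ p.radius := by
    refine p.le_radius_of_bound ‖F‖ (fun n => ?_)
    simp only [hp, ContinuousMultilinearMap.norm_mkPiRing, NNReal.coe_one, one_pow, mul_one]
    exact hardy_norm_coeff_le F n
  have hsum : ∀ z : ℂ, ‖z‖ < 1 → p.sum z = ∑' n : ℕ, z ^ n • F n := by
    intro z hz
    unfold FormalMultilinearSeries.sum
    congr 1
    ext n
    simp [hp, ContinuousMultilinearMap.mkPiRing_apply]
  have hat : HasFPowerSeriesAt p.sum p 0 :=
    (p.hasFPowerSeriesOnBall (lt_of_lt_of_le one_pos hrad)).hasFPowerSeriesAt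
  have hev : p.sum =ᶠ[nhds (0 : ℂ)] 0 := by
    filter_upwards [Metric.ball_mem_nhds (0 : ℂ) one_pos] with z hz
    rw [hsum z (by simpa using hz), h z hz]
    rfl
  have hp0 : p = 0 := hat.eq_zero_of_eventually hev
  ext n
  have : p n = 0 := by rw [hp0]; rfl
  have h2 := congrArg (fun (q : ContinuousMultilinearMap ℂ (fun _ : Fin n => ℂ) E) =>
    q (fun _ => (1 : ℂ))) this
  simpa [hp, ContinuousMultilinearMap.mkPiRing_apply] using h2


lemma hardy_double_summable (F : lp (fun _ : ℕ => E) 2) {z : ℂ} (hz : ‖z‖ < 1) :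
    Summable (fun q : ℕ × ℕ => (conj (z ^ q.1) * z ^ q.2) * (inner ℂ (F q.1) (F q.2) : ℂ)) := by
  have hgeo : Summable (fun n : ℕ => ‖F‖ * ‖z‖ ^ n) :=
    (summable_geometric_of_lt_one (norm_nonneg z) hz).mul_left ‖F‖
  have hb : Summable (fun q : ℕ × ℕ => (‖F‖ * ‖z‖ ^ q.1) * (‖F‖ * ‖z‖ ^ q.2)) :=
    hgeo.mul_of_nonneg hgeo (fun n => by positivity) (fun n => by positivity)
  refine Summable.of_norm (Summable.of_nonneg_of_le (fun q => norm_nonneg _) (fun q => ?_) hb)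
  have h1 : ‖(inner ℂ (F q.1) (F q.2) : ℂ)‖ ≤ ‖F q.1‖ * ‖F q.2‖ := norm_inner_le_norm _ _
  calc ‖(conj (z ^ q.1) * z ^ q.2) * (inner ℂ (F q.1) (F q.2) : ℂ)‖
      = (‖z‖ ^ q.1 * ‖z‖ ^ q.2) * ‖(inner ℂ (F q.1) (F q.2) : ℂ)‖ := by
        simp [norm_mul, RCLike.norm_conj, norm_pow]
    _ ≤ (‖z‖ ^ q.1 * ‖z‖ ^ q.2) * (‖F q.1‖ * ‖F q.2‖) :=
        mul_le_mul_of_nonneg_left h1 (by positivity)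
    _ ≤ (‖z‖ ^ q.1 * ‖z‖ ^ q.2) * (‖F‖ * ‖F‖) := by
        refine mul_le_mul_of_nonneg_left ?_ (by positivity)
        exact mul_le_mul (hardy_norm_coeff_le F _) (hardy_norm_coeff_le F _)
          (norm_nonneg _) (norm_nonneg _)
    _ = (‖F‖ * ‖z‖ ^ q.1) * (‖F‖ * ‖z‖ ^ q.2) := by ring

-- pointwise expansion of the squared norm as a double series
lemma hardy_sq_expand (F : lp (fun _ : ℕ => E) 2) {z : ℂ} (hz : ‖z‖ < 1) :
    ((‖∑' n : ℕ, z ^ n • F n‖ : ℂ) ^ 2)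
      = ∑' q : ℕ × ℕ, (conj (z ^ q.1) * z ^ q.2) * (inner ℂ (F q.1) (F q.2) : ℂ) := by
  set g : E := ∑' n : ℕ, z ^ n • F n with hg
  have hs : HasSum (fun n : ℕ => z ^ n • F n) g := (hardy_summable F hz).hasSum
  have hSq := hardy_double_summable F hz
  have h1 : HasSum (fun m : ℕ => (inner ℂ (z ^ m • F m) g : ℂ)) (inner ℂ g g : ℂ) := by
    have hstar := (((innerSL ℂ (E := E)) g).hasSum hs).star
    simpa only [innerSL_apply_apply, RCLike.star_def, inner_conj_symm] using hstar
  have h2 : ∀ m : ℕ, (inner ℂ (F m) g : ℂ) = ∑' n : ℕ, z ^ n * (inner ℂ (F m) (F n) : ℂ) := by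
    intro m
    have := ((innerSL ℂ (E := E)) (F m)).hasSum hs
    simp only [innerSL_apply_apply, inner_smul_right] at this
    exact this.tsum_eq.symm
  have hinner : (inner ℂ g g : ℂ)
      = ∑' q : ℕ × ℕ, (conj (z ^ q.1) * z ^ q.2) * (inner ℂ (F q.1) (F q.2) : ℂ) := by
    rw [← h1.tsum_eq, Summable.tsum_prod' hSq (fun m => hSq.prod_factor m)]
    congr 1
    ext m
    rw [inner_smul_left, h2 m, ← tsum_mul_left]
    congr 1
    ext n
    ring
  rw [← hinner, inner_self_eq_norm_sq_to_K]
  norm_num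


lemma hardy_summable_sq (F : lp (fun _ : ℕ => E) 2) : Summable (fun n => ‖F n‖ ^ 2) := by
  have h := (lp.memℓp F).summable (p := (2:ℝ≥0∞)) (by norm_num)
  simpa [Real.rpow_two] using h

lemma hardy_norm_sq (F : lp (fun _ : ℕ => E) 2) : ‖F‖ ^ 2 = ∑' n, ‖F n‖ ^ 2 := by
  have h := lp.norm_rpow_eq_tsum (p := (2:ℝ≥0∞)) (by norm_num) F
  simpa [Real.rpow_two] using h
set_option maxHeartbeats 1600000 in
lemma hardy_parseval (F : lp (fun _ : ℕ => E) 2) {r : ℝ} (h0 : 0 ≤ r) (hr : r < 1) :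
    ∫ θ in (0:ℝ)..(2*π), ‖∑' n : ℕ, ((r : ℂ) * Complex.exp (θ * Complex.I)) ^ n • F n‖ ^ 2
      = 2 * π * ∑' n : ℕ, r ^ (2*n) * ‖F n‖ ^ 2 := by
  set z : ℝ → ℂ := fun θ => (r : ℂ) * Complex.exp (θ * Complex.I) with hzdef
  have hznorm : ∀ θ : ℝ, ‖z θ‖ = r := by
    intro θ
    simp [hzdef, map_mul, Complex.norm_exp_ofReal_mul_I,
      _root_.abs_of_nonneg h0]
  have hzlt : ∀ θ : ℝ, ‖z θ‖ < 1 := fun θ => by rw [hznorm]; exact hr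
  set t : ℕ × ℕ → ℝ → ℂ :=
    fun q θ => (conj (z θ ^ q.1) * z θ ^ q.2) * (inner ℂ (F q.1) (F q.2) : ℂ) with htdef
  -- rewrite t in exponential form
  have hconj : ∀ θ : ℝ, conj (z θ) = (r : ℂ) * Complex.exp (-((θ : ℂ) * Complex.I)) := by
    intro θ
    simp [hzdef, map_mul, ← Complex.exp_conj, Complex.conj_ofReal]
  have key : ∀ (m n : ℕ) (θ : ℝ), t (m, n) θ
      = ((r : ℂ) ^ (m + n) * (inner ℂ (F m) (F n) : ℂ))
          * Complex.exp ((((n : ℂ) - m) * Complex.I) * θ) := by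
    intro m n θ
    have h1 : conj (z θ ^ m) * z θ ^ n
        = (r : ℂ) ^ (m + n) * Complex.exp ((((n : ℂ) - m) * Complex.I) * θ) := by
      rw [map_pow, hconj θ]
      simp only [hzdef]
      rw [mul_pow, mul_pow, ← Complex.exp_nat_mul, ← Complex.exp_nat_mul,
        mul_mul_mul_comm, ← Complex.exp_add, pow_add]
      congr 1
      push_cast
      ring
    rw [htdef]
    dsimp only
    rw [h1]
    ring
  -- interval integrability
  have hcont : ∀ q : ℕ × ℕ, Continuous (t q) := by
    intro q
    have : Continuous fun θ : ℝ => Complex.exp ((((q.2 : ℂ) - q.1) * Complex.I) * θ) := by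
      fun_prop
    have h2 : Continuous fun θ : ℝ =>
        ((r : ℂ) ^ (q.1 + q.2) * (inner ℂ (F q.1) (F q.2) : ℂ))
          * Complex.exp ((((q.2 : ℂ) - q.1) * Complex.I) * θ) := continuous_const.mul this
    convert h2 using 1
    funext θ
    exact key q.1 q.2 θ
  have hπ : (0:ℝ) ≤ 2 * π := by positivity
  -- the constant norm of t q
  have hnorm : ∀ (q : ℕ × ℕ) (θ : ℝ), ‖t q θ‖ = r ^ (q.1 + q.2) * ‖(inner ℂ (F q.1) (F q.2) : ℂ)‖ := by
    intro q θ
    rw [key q.1 q.2 θ]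
    have habs : ‖Complex.exp ((((q.2 : ℂ) - q.1) * Complex.I) * θ)‖ = 1 := by
      rw [Complex.norm_exp]
      have : ((((q.2 : ℂ) - q.1) * Complex.I) * θ).re = 0 := by simp
      rw [this, Real.exp_zero]
    rw [norm_mul, habs, mul_one, norm_mul, norm_pow]
    simp [_root_.abs_of_nonneg h0]
  -- integrals of t q
  have hint : ∀ q : ℕ × ℕ, (∫ θ in (0:ℝ)..(2*π), t q θ)
      = if q.1 = q.2 then ((2 * π : ℝ) : ℂ) * ((r : ℂ) ^ (q.1 + q.2) * (inner ℂ (F q.1) (F q.2) : ℂ))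
        else 0 := by
    rintro ⟨m, n⟩
    by_cases hmn : m = n
    · subst hmn
      rw [if_pos rfl]
      have hcongr : Set.EqOn (t (m, m))
          (fun _ : ℝ => (r : ℂ) ^ (m + m) * (inner ℂ (F m) (F m) : ℂ)) (Set.uIcc 0 (2*π)) := by
        intro θ _
        rw [key m m θ]
        simp
      rw [intervalIntegral.integral_congr hcongr, intervalIntegral.integral_const, sub_zero,
        Complex.real_smul]
    · simp only [if_neg hmn]
      have hc : (((n : ℂ) - m) * Complex.I) ≠ 0 := by
        apply mul_ne_zero _ Complex.I_ne_zero
        rw [sub_ne_zero]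
        exact_mod_cast fun h => hmn (by exact_mod_cast h.symm)
      calc (∫ θ in (0:ℝ)..(2*π), t (m, n) θ)
          = ∫ θ in (0:ℝ)..(2*π), ((r : ℂ) ^ (m + n) * (inner ℂ (F m) (F n) : ℂ))
              * Complex.exp ((((n : ℂ) - m) * Complex.I) * θ) := by
            apply intervalIntegral.integral_congr
            intro θ _
            exact key m n θ
        _ = ((r : ℂ) ^ (m + n) * (inner ℂ (F m) (F n) : ℂ))
              * ∫ θ in (0:ℝ)..(2*π), Complex.exp ((((n : ℂ) - m) * Complex.I) * θ) :=
            intervalIntegral.integral_const_mul _ _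
        _ = 0 := by
            rw [integral_exp_mul_complex hc]
            have h1 : Complex.exp ((((n : ℂ) - m) * Complex.I) * ((2:ℝ)*π : ℝ))
                = 1 := by
              have := Complex.exp_int_mul_two_pi_mul_I ((n : ℤ) - m)
              rw [← this]
              congr 1
              push_cast
              ring
            rw [h1]
            simp
  -- move to the restricted measure
  set μ : Measure ℝ := MeasureTheory.volume.restrict (Set.Ioc 0 (2*π)) with hμ
  have hμuniv : μ Set.univ = ENNReal.ofReal (2*π) := by
    simp [hμ, Real.volume_Ioc]
  have hIntμ : ∀ q : ℕ × ℕ, Integrable (t q) μ := fun q =>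
    ((hcont q).intervalIntegrable 0 (2*π)).1
  have hgeo : Summable (fun n : ℕ => ‖F‖ * r ^ n) :=
    (summable_geometric_of_lt_one h0 hr).mul_left ‖F‖
  have hCS : Summable (fun q : ℕ × ℕ => (‖F‖ * r ^ q.1) * (‖F‖ * r ^ q.2)) :=
    hgeo.mul_of_nonneg hgeo (fun n => by positivity) (fun n => by positivity)
  have hnormint : ∀ q : ℕ × ℕ,
      (∫ θ, ‖t q θ‖ ∂μ) = (2*π) * (r ^ (q.1 + q.2) * ‖(inner ℂ (F q.1) (F q.2) : ℂ)‖) := by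
    intro q
    have hfn : (fun θ => ‖t q θ‖)
        = fun _ => r ^ (q.1 + q.2) * ‖(inner ℂ (F q.1) (F q.2) : ℂ)‖ := funext (hnorm q)
    rw [hfn, MeasureTheory.integral_const, measureReal_def, hμuniv, ENNReal.toReal_ofReal hπ, smul_eq_mul]
  have hsumnorm : Summable (fun q : ℕ × ℕ => ∫ θ, ‖t q θ‖ ∂μ) := by
    have hb : Summable (fun q : ℕ × ℕ => (2*π) * ((‖F‖ * r ^ q.1) * (‖F‖ * r ^ q.2))) :=
      hCS.mul_left _
    refine Summable.of_nonneg_of_le (fun q => ?_) (fun q => ?_) hb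
    · rw [hnormint q]; positivity
    · rw [hnormint q]
      refine mul_le_mul_of_nonneg_left ?_ hπ
      calc r ^ (q.1 + q.2) * ‖(inner ℂ (F q.1) (F q.2) : ℂ)‖
          ≤ r ^ (q.1 + q.2) * (‖F q.1‖ * ‖F q.2‖) :=
            mul_le_mul_of_nonneg_left (norm_inner_le_norm _ _) (by positivity)
        _ ≤ r ^ (q.1 + q.2) * (‖F‖ * ‖F‖) := by
            refine mul_le_mul_of_nonneg_left ?_ (by positivity)
            exact mul_le_mul (hardy_norm_coeff_le F _) (hardy_norm_coeff_le F _)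
              (norm_nonneg _) (norm_nonneg _)
        _ = (‖F‖ * r ^ q.1) * (‖F‖ * r ^ q.2) := by rw [pow_add]; ring
  have hswap := MeasureTheory.integral_tsum_of_summable_integral_norm hIntμ hsumnorm
  -- the diagonal function
  set D : ℕ × ℕ → ℂ := fun q =>
    if q.1 = q.2 then ((2 * π : ℝ) : ℂ) * ((r : ℂ) ^ (q.1 + q.2) * (inner ℂ (F q.1) (F q.2) : ℂ))
    else 0 with hDdef
  have hDeq : ∀ q : ℕ × ℕ, (∫ θ, t q θ ∂μ) = D q := by
    intro q
    rw [hμ, ← intervalIntegral.integral_of_le hπ, hint q]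
  have hDsum : Summable D := by
    rw [← funext hDeq]
    exact Summable.of_norm_bounded hsumnorm (fun q => norm_integral_le_integral_norm _)
  -- collapse the diagonal
  have hdiag : (∑' q : ℕ × ℕ, D q)
      = ∑' n : ℕ, ((2 * π : ℝ) : ℂ) * ((r : ℂ) ^ (n + n) * (inner ℂ (F n) (F n) : ℂ)) := by
    rw [Summable.tsum_prod' hDsum hDsum.prod_factor]
    congr 1
    funext m
    rw [tsum_eq_single m (fun n hn => by simp [hDdef, (Ne.symm hn : ¬ m = n)])]
    simp [hDdef]
  -- real summability
  have hxs : Summable (fun n : ℕ => r ^ (2*n) * ‖F n‖ ^ 2) := by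
    refine Summable.of_nonneg_of_le (fun n => by positivity) (fun n => ?_) (hardy_summable_sq F)
    have h1 : r ^ (2*n) ≤ 1 := pow_le_one₀ h0 hr.le
    nlinarith [sq_nonneg (‖F n‖), norm_nonneg (F n)]
  -- put everything together, in ℂ
  have hC : ((∫ θ in (0:ℝ)..(2*π),
        ‖∑' n : ℕ, z θ ^ n • F n‖ ^ 2 : ℝ) : ℂ)
      = ((2 * π * ∑' n : ℕ, r ^ (2*n) * ‖F n‖ ^ 2 : ℝ) : ℂ) := by
    have hcoe : ((∫ θ in (0:ℝ)..(2*π), ‖∑' n : ℕ, z θ ^ n • F n‖ ^ 2 : ℝ) : ℂ)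
        = ∫ θ in (0:ℝ)..(2*π), ((‖∑' n : ℕ, z θ ^ n • F n‖ ^ 2 : ℝ) : ℂ) :=
      (RCLike.intervalIntegral_ofReal (𝕜 := ℂ)).symm
    rw [hcoe]
    have hpoint : Set.EqOn (fun θ : ℝ => ((‖∑' n : ℕ, z θ ^ n • F n‖ ^ 2 : ℝ) : ℂ))
        (fun θ : ℝ => ∑' q : ℕ × ℕ, t q θ) (Set.uIcc 0 (2*π)) := by
      intro θ _
      simp only [Complex.ofReal_pow]
      exact hardy_sq_expand F (hzlt θ)
    rw [intervalIntegral.integral_congr hpoint, intervalIntegral.integral_of_le hπ, ← hμ,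
      ← hswap]
    calc (∑' q : ℕ × ℕ, ∫ θ, t q θ ∂μ) = ∑' q : ℕ × ℕ, D q := by rw [funext hDeq]
      _ = ∑' n : ℕ, ((2 * π : ℝ) : ℂ) * ((r : ℂ) ^ (n + n) * (inner ℂ (F n) (F n) : ℂ)) := hdiag
      _ = ∑' n : ℕ, ((2 * π * (r ^ (2*n) * ‖F n‖ ^ 2) : ℝ) : ℂ) := by
          congr 1
          funext n
          have hin : (inner ℂ (F n) (F n) : ℂ) = ((‖F n‖ ^ 2 : ℝ) : ℂ) := by
            exact_mod_cast inner_self_eq_norm_sq_to_K (𝕜 := ℂ) (F n)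
          rw [hin, two_mul]
          push_cast
          ring
      _ = ((2 * π * ∑' n : ℕ, r ^ (2*n) * ‖F n‖ ^ 2 : ℝ) : ℂ) := by
          rw [← Complex.ofReal_tsum]
          norm_cast
          rw [tsum_mul_left]
  exact_mod_cast hC
lemma hardy_summable_rsq (F : lp (fun _ : ℕ => E) 2) {r : ℝ} (h0 : 0 ≤ r) (hr : r ≤ 1) :
    Summable (fun n : ℕ => r ^ (2*n) * ‖F n‖ ^ 2) := by
  refine Summable.of_nonneg_of_le (fun n => by positivity) (fun n => ?_) (hardy_summable_sq F)
  have h1 : r ^ (2*n) ≤ 1 := pow_le_one₀ h0 hr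
  nlinarith [sq_nonneg (‖F n‖)]

lemma hardy_contraction (ψ : ℂ → (E →L[ℂ] E))
    (hψbd : ∀ z ∈ ball (0 : ℂ) 1, ‖ψ z‖ ≤ 1)
    (Mψ : lp (fun _ : ℕ => E) 2 →L[ℂ] lp (fun _ : ℕ => E) 2)
    (hMψ : ∀ F : lp (fun _ : ℕ => E) 2, ∀ z ∈ ball (0 : ℂ) 1,
      (∑' n : ℕ, z ^ n • (Mψ F) n) = ψ z (∑' n : ℕ, z ^ n • F n))
    (G : lp (fun _ : ℕ => E) 2) : ‖Mψ G‖ ≤ ‖G‖ := by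
  set H : lp (fun _ : ℕ => E) 2 := Mψ G with hH
  have hπ : (0:ℝ) ≤ 2 * π := by positivity
  have hmain : ∀ r : ℝ, 0 ≤ r → r < 1 →
      (∑' n : ℕ, r ^ (2*n) * ‖H n‖ ^ 2) ≤ ∑' n : ℕ, ‖G n‖ ^ 2 := by
    intro r h0 hr
    have hznorm : ∀ θ : ℝ, ‖(r : ℂ) * Complex.exp (θ * Complex.I)‖ = r := by
      intro θ
      simp [map_mul, Complex.norm_exp_ofReal_mul_I,
        _root_.abs_of_nonneg h0]
    have hcont : ∀ F : lp (fun _ : ℕ => E) 2,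
        Continuous fun θ : ℝ => ∑' n : ℕ, ((r : ℂ) * Complex.exp (θ * Complex.I)) ^ n • F n := by
      intro F
      refine continuous_tsum (fun n => ?_) ((summable_geometric_of_lt_one h0 hr).mul_left ‖F‖)
        (fun n θ => ?_)
      · fun_prop
      · rw [norm_smul, norm_pow, hznorm θ, mul_comm]
        exact mul_le_mul_of_nonneg_right (hardy_norm_coeff_le F n) (by positivity)
    have hpw : ∀ θ ∈ Set.Icc (0:ℝ) (2*π),
        ‖∑' n : ℕ, ((r : ℂ) * Complex.exp (θ * Complex.I)) ^ n • H n‖ ^ 2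
          ≤ ‖∑' n : ℕ, ((r : ℂ) * Complex.exp (θ * Complex.I)) ^ n • G n‖ ^ 2 := by
      intro θ _
      have hzball : ((r : ℂ) * Complex.exp (θ * Complex.I)) ∈ ball (0:ℂ) 1 := by
        rw [mem_ball_zero_iff, hznorm θ]; exact hr
      have h1 := hMψ G _ hzball
      have h2 : ‖∑' n : ℕ, ((r : ℂ) * Complex.exp (θ * Complex.I)) ^ n • H n‖
          ≤ ‖∑' n : ℕ, ((r : ℂ) * Complex.exp (θ * Complex.I)) ^ n • G n‖ := by
        rw [hH, h1]
        calc ‖ψ _ (∑' n : ℕ, ((r : ℂ) * Complex.exp (θ * Complex.I)) ^ n • G n)‖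
            ≤ ‖ψ ((r : ℂ) * Complex.exp (θ * Complex.I))‖
                * ‖∑' n : ℕ, ((r : ℂ) * Complex.exp (θ * Complex.I)) ^ n • G n‖ :=
              ContinuousLinearMap.le_opNorm _ _
          _ ≤ 1 * ‖∑' n : ℕ, ((r : ℂ) * Complex.exp (θ * Complex.I)) ^ n • G n‖ :=
              mul_le_mul_of_nonneg_right (hψbd _ hzball) (norm_nonneg _)
          _ = _ := one_mul _
      exact pow_le_pow_left₀ (norm_nonneg _) h2 2
    have hIH : IntervalIntegrable
        (fun θ : ℝ => ‖∑' n : ℕ, ((r : ℂ) * Complex.exp (θ * Complex.I)) ^ n • H n‖ ^ 2)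
        volume 0 (2*π) := (((hcont H).norm).pow 2).intervalIntegrable _ _
    have hIG : IntervalIntegrable
        (fun θ : ℝ => ‖∑' n : ℕ, ((r : ℂ) * Complex.exp (θ * Complex.I)) ^ n • G n‖ ^ 2)
        volume 0 (2*π) := (((hcont G).norm).pow 2).intervalIntegrable _ _
    have hmono := intervalIntegral.integral_mono_on hπ hIH hIG hpw
    rw [hardy_parseval H h0 hr, hardy_parseval G h0 hr] at hmono
    have h2π : (0:ℝ) < 2 * π := by positivity
    have hAB : (∑' n : ℕ, r ^ (2*n) * ‖H n‖ ^ 2) ≤ ∑' n : ℕ, r ^ (2*n) * ‖G n‖ ^ 2 :=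
      le_of_mul_le_mul_left (by linarith) h2π
    refine hAB.trans (Summable.tsum_le_tsum (fun n => ?_) (hardy_summable_rsq G h0 hr.le)
      (hardy_summable_sq G))
    have h1 : r ^ (2*n) ≤ 1 := pow_le_one₀ h0 hr.le
    nlinarith [sq_nonneg (‖G n‖)]
  -- limit r → 1⁻ on finite partial sums
  have hbound : ∀ N : ℕ, (∑ n ∈ Finset.range N, ‖H n‖ ^ 2) ≤ ∑' n : ℕ, ‖G n‖ ^ 2 := by
    intro N
    have hev : ∀ᶠ r : ℝ in nhdsWithin 1 (Set.Iio 1),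
        (∑ n ∈ Finset.range N, r ^ (2*n) * ‖H n‖ ^ 2) ≤ ∑' n : ℕ, ‖G n‖ ^ 2 := by
      filter_upwards [Ioo_mem_nhdsLT_of_mem
        (show (1:ℝ) ∈ Set.Ioc (0:ℝ) 1 by constructor <;> norm_num)] with r hr
      calc (∑ n ∈ Finset.range N, r ^ (2*n) * ‖H n‖ ^ 2)
          ≤ ∑' n : ℕ, r ^ (2*n) * ‖H n‖ ^ 2 :=
            Summable.sum_le_tsum _ (fun n _ => mul_nonneg (pow_nonneg hr.1.le _) (sq_nonneg _))
              (hardy_summable_rsq H hr.1.le hr.2.le)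
        _ ≤ ∑' n : ℕ, ‖G n‖ ^ 2 := hmain r hr.1.le hr.2
    have htend : Filter.Tendsto (fun r : ℝ => ∑ n ∈ Finset.range N, r ^ (2*n) * ‖H n‖ ^ 2)
        (nhdsWithin 1 (Set.Iio 1)) (nhds (∑ n ∈ Finset.range N, (1:ℝ) ^ (2*n) * ‖H n‖ ^ 2)) :=
      ((continuous_finset_sum _ (fun n _ => (continuous_pow (2*n)).mul continuous_const)).tendsto
        1).mono_left nhdsWithin_le_nhds
    have hle := le_of_tendsto htend hev
    simpa using hle
  have htsum : (∑' n : ℕ, ‖H n‖ ^ 2) ≤ ∑' n : ℕ, ‖G n‖ ^ 2 := by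
    refine Summable.tsum_le_of_sum_le (hardy_summable_sq H) (fun s => ?_)
    obtain ⟨N, hN⟩ := s.exists_nat_subset_range
    exact le_trans (Finset.sum_le_sum_of_subset_of_nonneg hN (fun n _ _ => by positivity))
      (hbound N)
  have hfin : ‖H‖ ^ 2 ≤ ‖G‖ ^ 2 := by
    rw [hardy_norm_sq H, hardy_norm_sq G]
    exact htsum
  exact (pow_le_pow_iff_left₀ (norm_nonneg H) (norm_nonneg G) two_ne_zero).mp hfin

end HardyAux

/-- Model the `E`-valued Hardy space `H²(𝔻, E)` as
`lp (fun _ : ℕ => E) 2` (Taylor coefficient sequences, `F` representing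
`z ↦ ∑' n, zⁿ • F n`), with `M_{z^E}` the unilateral shift.  Let `Q ⊆ H²(𝔻, E)` be a closed
subspace invariant under `(M_{z^E})*`, and let `ψ ∈ H^∞(𝔻, B(E))` with `‖ψ‖_∞ ≤ 1` be such
that `Q` is invariant under `M_ψ*` and `1 ∉ σ_p(ψ(z))` for every `z ∈ 𝔻`.  Then `1` is not an
eigenvalue of the compression `P_Q M_ψ|_Q`. -/
theorem one_not_eigenvalue_of_compressed_mult_operator
    {E : Type*} [NormedAddCommGroup E] [InnerProductSpace ℂ E] [CompleteSpace E]
    (Mz : lp (fun _ : ℕ => E) 2 →L[ℂ] lp (fun _ : ℕ => E) 2)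
    (hMzE : ∀ F : lp (fun _ : ℕ => E) 2, (Mz F) 0 = 0 ∧ ∀ m : ℕ, (Mz F) (m + 1) = F m)
    (ψ : ℂ → (E →L[ℂ] E))
    (hψanal : DifferentiableOn ℂ ψ (ball (0 : ℂ) 1))
    (hψbd : ∀ z ∈ ball (0 : ℂ) 1, ‖ψ z‖ ≤ 1)
    (hψnoeig : ∀ z ∈ ball (0 : ℂ) 1, ∀ ξ : E, ψ z ξ = ξ → ξ = 0)
    (Mψ : lp (fun _ : ℕ => E) 2 →L[ℂ] lp (fun _ : ℕ => E) 2)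
    (hMψ : ∀ F : lp (fun _ : ℕ => E) 2, ∀ z ∈ ball (0 : ℂ) 1,
      (∑' n : ℕ, z ^ n • (Mψ F) n) = ψ z (∑' n : ℕ, z ^ n • F n))
    (Q : Submodule ℂ (lp (fun _ : ℕ => E) 2)) [CompleteSpace Q]
    (hQz : ∀ F ∈ Q, adjoint Mz F ∈ Q)
    (hQψ : ∀ F ∈ Q, adjoint Mψ F ∈ Q) :
    ∀ F ∈ Q, (Submodule.orthogonalProjectionOnto Q (Mψ F) : lp (fun _ : ℕ => E) 2) = F → F = 0 := by
  intro F hF hfix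
  -- Since `P_Q (Mψ F) = F` and `Mψ` is a contraction, `Mψ F = F`.
  have hcontr : ‖Mψ F‖ ≤ ‖F‖ := hardy_contraction ψ hψbd Mψ hMψ F
  set v : lp (fun _ : ℕ => E) 2 := Mψ F with hv
  set w : lp (fun _ : ℕ => E) 2 := (Submodule.orthogonalProjectionOnto Q v : lp (fun _ : ℕ => E) 2) with hw
  have horth : (inner ℂ w (v - w) : ℂ) = 0 :=
    Submodule.inner_right_of_mem_orthogonal (Submodule.orthogonalProjectionOnto Q v).2
      (Submodule.sub_starProjection_mem_orthogonal (K := Q) v)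
  have hpyth : ‖v‖ ^ 2 = ‖w‖ ^ 2 + ‖v - w‖ ^ 2 := by
    have h1 : w + (v - w) = v := by abel
    have := norm_add_sq_eq_norm_sq_add_norm_sq_of_inner_eq_zero w (v - w) horth
    rw [h1] at this
    simp only [pow_two]
    exact this
  have hwF : w = F := hfix
  have hzero : ‖v - F‖ ^ 2 ≤ 0 := by
    have h2 : ‖v‖ ^ 2 ≤ ‖F‖ ^ 2 := by
      have := pow_le_pow_left₀ (norm_nonneg v) hcontr 2
      simpa using this
    rw [hpyth, hwF] at h2
    linarith
  have hvw : v = F := by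
    have h0 : ‖v - F‖ = 0 := by nlinarith [norm_nonneg (v - F)]
    exact sub_eq_zero.mp (norm_eq_zero.mp h0)
  have hfix2 : Mψ F = F := by rw [← hv]; exact hvw
  -- Now `F` is an eigenvector of `Mψ` with eigenvalue 1, hence zero.
  apply hardy_coeff_zero
  intro z hz
  have h := hMψ F z hz
  rw [hfix2] at h
  exact hψnoeig z hz _ h.symm
end
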